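/- Let Z₂ ~ Exp(mean B), Z₁ ~ Gamma(L, D), and Z ~ having density f_Z(z) = (t^L/(Γ(L)A^L C))e^{−z/C}Υ(L, z/t) (the sum of Gamma(L,A) and Exp(C), A < C, t = (1/A−1/C)^{−1}), all mutually independent. Then the density of Q = Z₂·Z is f_Q(q) = (2t^L/(B·C·A^L))·[K₀(2√(q/(BC))) − ∑_{j=0}^{L−1} ((Bθ)^{−j/2} q^{j/2}/(t^j Γ(j+1)))·K_j(2√(qθ/B))] for q > 0, where θ = 1/C + 1/t and K_j is the modified Bessel function of the second kind. -/

import Mathlib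

/-!
Conditioning on `Z₂`, the density of `Q = Z₂ · Z` is
`f_Q(q) = ∫₀^∞ f_{Z₂}(z) f_Z(q/z) dz/z`.
For integer `L` the lower incomplete gamma function is the finite series
`Υ(L, x) = (L-1)! (1 - e^{-x} ∑_{k<L} x^k/k!)`, so the integrand splits into finitely many
terms `z^{-k-1} e^{-az - b/z}`. Each of these is a Bessel integral:
`∫₀^∞ z^{ν-1} e^{-az-b/z} dz = 2 (b/a)^{ν/2} K_ν(2√(ab))` (substitute `z = √(b/a) x`),
and `K_{-ν} = K_ν` by the substitution `u ↦ 1/u`.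
-/

open MeasureTheory ProbabilityTheory

/-- The lower incomplete Gamma function `Υ(a, x) = ∫₀^x u^(a-1) e^(-u) du`. -/
noncomputable def lowerGamma (a : ℕ) (x : ℝ) : ℝ :=
  ∫ u in Set.Ioc (0 : ℝ) x, u ^ (a - 1) * Real.exp (-u)

/-- The modified Bessel function of the second kind, via the integral representation
`K_ν(x) = (1/2) ∫₀^∞ u^(ν-1) exp(-(x/2)(u + 1/u)) du` (valid for `x > 0`). -/
noncomputable def besselK (ν : ℝ) (x : ℝ) : ℝ :=
  (1 / 2) * ∫ u in Set.Ioi (0 : ℝ), u ^ (ν - 1) * Real.exp (-(x / 2) * (u + 1 / u))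

open Real Set Finset
open scoped ENNReal Nat

theorem integral_pow_mul_exp_neg (n : ℕ) (x : ℝ) :
    ∫ u in (0 : ℝ)..x, u ^ n * exp (-u) =
      n ! * (1 - exp (-x) * ∑ k ∈ range (n + 1), x ^ k / k !) := by
  induction n with
  | zero => simp [intervalIntegral.integral_comp_neg (fun u => exp u)]
  | succ n ih =>
    have hibp := intervalIntegral.integral_mul_deriv_eq_deriv_mul (a := 0) (b := x)
      (u := fun u => u ^ (n + 1)) (u' := fun u => (n + 1) * u ^ n)
      (v := fun u => -exp (-u)) (v' := fun u => exp (-u))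
      (fun u _ => by simpa using hasDerivAt_pow (n + 1) u)
      (fun u _ => (hasDerivAt_neg u).exp.neg.congr_deriv (by ring))
      (by apply Continuous.intervalIntegrable; fun_prop)
      (by apply Continuous.intervalIntegrable; fun_prop)
    have hrec : ∫ u in (0 : ℝ)..x, u ^ (n + 1) * exp (-u) =
        -(x ^ (n + 1) * exp (-x)) + (n + 1) * ∫ u in (0 : ℝ)..x, u ^ n * exp (-u) := by
      rw [hibp, ← intervalIntegral.integral_const_mul]
      simp only [mul_neg, intervalIntegral.integral_neg, mul_assoc]
      simp
    rw [hrec, ih, sum_range_succ _ (n + 1)]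
    push_cast [Nat.factorial_succ]
    field_simp
    ring

theorem lowerGamma_eq {L : ℕ} (hL : 1 ≤ L) {x : ℝ} (hx : 0 ≤ x) :
    lowerGamma L x = (L - 1)! * (1 - exp (-x) * ∑ k ∈ range L, x ^ k / k !) := by
  rw [lowerGamma, ← intervalIntegral.integral_of_le hx, integral_pow_mul_exp_neg,
    Nat.sub_add_cancel hL]

theorem lowerGamma_nonneg (a : ℕ) (x : ℝ) : 0 ≤ lowerGamma a x :=
  setIntegral_nonneg measurableSet_Ioc fun u hu => by have := hu.1; positivity

theorem lowerGamma_pos (a : ℕ) {x : ℝ} (hx : 0 < x) : 0 < lowerGamma a x := by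
  rw [lowerGamma, ← intervalIntegral.integral_of_le hx.le]
  exact intervalIntegral.intervalIntegral_pos_of_pos_on
    (by apply Continuous.intervalIntegrable; fun_prop)
    (fun u hu => by have := hu.1; positivity) hx

theorem monotone_lowerGamma (a : ℕ) : Monotone (lowerGamma a) := fun _ _ hxy =>
  setIntegral_mono_set
    (by fun_prop : Continuous fun u : ℝ => u ^ (a - 1) * exp (-u)).integrableOn_Ioc
    ((ae_restrict_mem measurableSet_Ioc).mono fun u hu => by
      have := hu.1; positivity)
    (Ioc_subset_Ioc_right hxy).eventuallyLE

theorem integrableOn_rpow_mul_exp_neg_mul_sub_div (ν : ℝ) {a b : ℝ} (ha : 0 < a) (hb : 0 < b) :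
    IntegrableOn (fun z : ℝ => z ^ ν * exp (-(a * z) - b / z)) (Ioi 0) := by
  have hmeas : AEStronglyMeasurable (fun z : ℝ => z ^ ν * exp (-(a * z) - b / z))
      (volume.restrict (Ioi 0)) := by
    refine ContinuousOn.aestronglyMeasurable ?_ measurableSet_Ioi
    fun_prop (disch := exact fun z hz => ne_of_gt hz)
  rw [← Ioc_union_Ioi_eq_Ioi zero_le_one]
  refine IntegrableOn.union ?_ ?_
  · -- near `0`, `exp (-b / z)` beats any power of `z`
    set n := ⌈-ν⌉₊
    refine Integrable.mono' (integrableOn_const (C := (n ! / b ^ n : ℝ)) measure_Ioc_lt_top.ne)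
      (hmeas.mono_set Ioc_subset_Ioi_self) ?_
    filter_upwards [ae_restrict_mem measurableSet_Ioc] with z ⟨hz0, hz1⟩
    have hexp : exp (-(a * z) - b / z) ≤ n ! / b ^ n * z ^ n := by
      have h := pow_div_factorial_le_exp (b / z) (div_pos hb hz0).le n
      calc exp (-(a * z) - b / z) ≤ exp (-(b / z)) := exp_le_exp.2 (by nlinarith)
        _ = (exp (b / z))⁻¹ := exp_neg _
        _ ≤ ((b / z) ^ n / n !)⁻¹ := inv_anti₀ (by positivity) h
        _ = n ! / b ^ n * z ^ n := by rw [div_pow]; field_simp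
    rw [Real.norm_of_nonneg (by positivity)]
    calc z ^ ν * exp (-(a * z) - b / z) ≤ z ^ ν * (n ! / b ^ n * z ^ n) := by gcongr
      _ = n ! / b ^ n * z ^ (ν + n) := by rw [rpow_add hz0, rpow_natCast]; ring
      _ ≤ n ! / b ^ n := by
        refine mul_le_of_le_one_right (by positivity) (rpow_le_one hz0.le hz1 ?_)
        linarith [Nat.le_ceil (-ν)]
  · set m := ⌈ν⌉₊
    have hdom : IntegrableOn (fun z : ℝ => z ^ (m : ℝ) * exp (-a * z ^ (1 : ℝ))) (Ioi 0) :=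
      integrableOn_rpow_mul_exp_neg_mul_rpow (by linarith [m.cast_nonneg (α := ℝ)]) one_pos ha
    refine Integrable.mono' (hdom.mono_set (Ioi_subset_Ioi zero_le_one))
      (hmeas.mono_set (Ioi_subset_Ioi zero_le_one)) ?_
    filter_upwards [ae_restrict_mem measurableSet_Ioi] with z (hz : 1 < z)
    have hz0 : 0 < z := zero_lt_one.trans hz
    rw [Real.norm_of_nonneg (by positivity), rpow_one, neg_mul]
    gcongr
    · exact hz.le
    · exact Nat.le_ceil ν
    · have : 0 < b / z := by positivity
      linarith

theorem besselK_neg (ν x : ℝ) : besselK (-ν) x = besselK ν x := by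
  rw [besselK, besselK, ← integral_comp_rpow_Ioi _ (by norm_num : (-1 : ℝ) ≠ 0)]
  congr 1
  refine setIntegral_congr_fun measurableSet_Ioi fun u (hu : 0 < u) => ?_
  simp only [smul_eq_mul, rpow_neg_one, one_div, inv_inv]
  rw [inv_rpow hu.le, ← rpow_neg hu.le, abs_neg, abs_one, one_mul, ← mul_assoc, ← rpow_add hu]
  ring_nf

theorem integral_rpow_mul_exp_neg_mul_sub_div (ν : ℝ) {a b : ℝ} (ha : 0 < a) (hb : 0 < b) :
    ∫ z in Ioi 0, z ^ (ν - 1) * exp (-(a * z) - b / z) =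
      2 * (b / a) ^ (ν / 2) * besselK ν (2 * √(a * b)) := by
  -- substitute `z = s x` with `s = √(b / a)`, which balances the two exponents
  set s := √(b / a)
  set c := √(a * b)
  have hs : 0 < s := sqrt_pos.2 (div_pos hb ha)
  have has : a * s = c := by
    rw [← sqrt_sq ha.le, ← sqrt_mul (sq_nonneg a)]
    congr 1; field_simp
  have hbs : b / s = c := by
    rw [div_eq_iff hs.ne', ← has, mul_assoc, mul_self_sqrt (div_pos hb ha).le]
    field_simp
  have hsub := integral_comp_mul_left_Ioi (fun z => z ^ (ν - 1) * exp (-(a * z) - b / z)) 0 hs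
  rw [mul_zero, smul_eq_mul, eq_inv_mul_iff_mul_eq₀ hs.ne'] at hsub
  have hpow : s ^ ν = (b / a) ^ (ν / 2) := by
    rw [show s = √(b / a) from rfl, sqrt_eq_rpow, ← rpow_mul (div_pos hb ha).le]; ring_nf
  calc ∫ z in Ioi 0, z ^ (ν - 1) * exp (-(a * z) - b / z)
      = s * ∫ x in Ioi 0, (s * x) ^ (ν - 1) * exp (-(a * (s * x)) - b / (s * x)) := hsub.symm
    _ = s * ∫ x in Ioi 0, s ^ (ν - 1) * (x ^ (ν - 1) * exp (-(2 * c / 2) * (x + 1 / x))) := by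
      congr 1
      refine setIntegral_congr_fun measurableSet_Ioi fun x (hx : 0 < x) => ?_
      rw [mul_rpow hs.le hx.le, ← mul_assoc a, has, ← div_div, hbs]
      ring_nf
    _ = 2 * (b / a) ^ (ν / 2) * besselK ν (2 * c) := by
      rw [integral_const_mul, besselK, rpow_sub_one hs.ne', ← hpow]
      field_simp

section ExpTimesLowerGamma

variable {L : ℕ} {a c s : ℝ}

theorem exp_mul_lowerGamma_eq_sum (hL : 1 ≤ L) (hs : 0 ≤ s) {z : ℝ} (hz : 0 < z) :
    exp (-(a * z)) * z⁻¹ * (exp (-(c / z)) * lowerGamma L (s / z)) =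
      (L - 1)! * (z⁻¹ * exp (-(a * z) - c / z) -
        ∑ k ∈ range L,
          s ^ k / k ! * (z ^ (-(k : ℝ) - 1) * exp (-(a * z) - (c + s) / z))) := by
  have hsum :
      ∑ k ∈ range L, s ^ k / k ! * (z ^ (-(k : ℝ) - 1) * exp (-(a * z) - (c + s) / z)) =
        exp (-(a * z)) * z⁻¹ * exp (-(c / z)) * exp (-(s / z)) *
          ∑ k ∈ range L, (s / z) ^ k / k ! := by
    rw [mul_sum]
    refine sum_congr rfl fun k _ => ?_
    rw [rpow_sub_one hz.ne', rpow_neg hz.le, rpow_natCast, div_pow, sub_eq_add_neg, exp_add,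
      add_div, neg_add, exp_add]
    field_simp
  rw [hsum, lowerGamma_eq hL (by positivity), sub_eq_add_neg (-(a * z)), exp_add]
  ring

theorem integrableOn_exp_mul_lowerGamma (hL : 1 ≤ L) (ha : 0 < a) (hc : 0 < c) (hs : 0 < s) :
    IntegrableOn (fun z => exp (-(a * z)) * z⁻¹ * (exp (-(c / z)) * lowerGamma L (s / z)))
      (Ioi 0) := by
  have h₀ := integrableOn_rpow_mul_exp_neg_mul_sub_div (-1) ha hc
  simp only [rpow_neg_one] at h₀
  refine IntegrableOn.congr_fun ?_
    (fun z (hz : 0 < z) => (exp_mul_lowerGamma_eq_sum hL hs.le hz).symm) measurableSet_Ioi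
  exact (h₀.sub (integrable_finsetSum _ fun k _ =>
    (integrableOn_rpow_mul_exp_neg_mul_sub_div _ ha (add_pos hc hs)).const_mul _)).const_mul _

theorem integral_exp_mul_lowerGamma (hL : 1 ≤ L) (ha : 0 < a) (hc : 0 < c) (hs : 0 < s) :
    ∫ z in Ioi 0, exp (-(a * z)) * z⁻¹ * (exp (-(c / z)) * lowerGamma L (s / z)) =
      2 * (L - 1)! * (besselK 0 (2 * √(a * c)) -
        ∑ k ∈ range L, s ^ k / k ! * ((c + s) / a) ^ (-(k : ℝ) / 2) *
          besselK k (2 * √(a * (c + s)))) := by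
  have h₀ := integrableOn_rpow_mul_exp_neg_mul_sub_div (-1) ha hc
  have hk (k : ℕ) := (integrableOn_rpow_mul_exp_neg_mul_sub_div (-k - 1) ha
    (add_pos hc hs)).const_mul (s ^ k / k !)
  have hint₀ := integral_rpow_mul_exp_neg_mul_sub_div 0 ha hc
  have hint (k : ℕ) := integral_rpow_mul_exp_neg_mul_sub_div (-k) ha (add_pos hc hs)
  simp only [rpow_neg_one, zero_sub, zero_div, rpow_zero, mul_one] at h₀ hint₀
  rw [setIntegral_congr_fun measurableSet_Ioi
      (fun z (hz : 0 < z) => exp_mul_lowerGamma_eq_sum hL hs.le hz), integral_const_mul,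
    integral_sub h₀ (integrable_finsetSum _ fun k _ => hk k),
    integral_finsetSum _ fun k _ => hk k, hint₀]
  simp only [integral_const_mul, hint, besselK_neg, mul_sub, mul_sum]
  ring_nf

end ExpTimesLowerGamma

theorem lintegral_comp_mul_left_of_pos (F : ℝ → ℝ≥0∞) {c : ℝ} (hc : 0 < c) :
    ∫⁻ y, F (c * y) = ENNReal.ofReal c⁻¹ * ∫⁻ q, F q := by
  have h := lintegral_map_equiv F (MeasurableEquiv.mulLeft₀ c hc.ne') (μ := volume)
  rw [MeasurableEquiv.coe_mulLeft₀, Real.map_volume_mul_left hc.ne', lintegral_smul_measure,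
    abs_of_pos (inv_pos.2 hc)] at h
  exact h.symm

theorem mconv_withDensity_eq_lintegral_Ioi {f g : ℝ → ℝ≥0∞} (hf : Measurable f)
    (hg : Measurable g) (hf_neg : ∀ x < 0, f x = 0) :
    volume.withDensity f ∗ₘ volume.withDensity g =
      volume.withDensity fun q => ∫⁻ x in Ioi 0, f x * ENNReal.ofReal x⁻¹ * g (q / x) := by
  have hF : Measurable fun p : ℝ × ℝ => f p.1 * ENNReal.ofReal p.1⁻¹ * g (p.2 / p.1) := by
    fun_prop
  refine Measure.ext_of_lintegral _ fun ψ hψ => ?_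
  calc ∫⁻ q, ψ q ∂(volume.withDensity f ∗ₘ volume.withDensity g)
      = ∫⁻ x, f x * ∫⁻ y, g y * ψ (x * y) := by
        rw [Measure.lintegral_mconv hψ, lintegral_withDensity_eq_lintegral_mul _ hf (by fun_prop)]
        refine lintegral_congr fun x => ?_
        rw [Pi.mul_apply, lintegral_withDensity_eq_lintegral_mul _ hg (by fun_prop)]
        rfl
    _ = ∫⁻ x in Ioi 0, f x * ∫⁻ y, g y * ψ (x * y) := by
        rw [setLIntegral_congr Ioi_ae_eq_Ici, setLIntegral_eq_of_support_subset]
        intro x hx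
        by_contra hneg
        exact hx (by simp [hf_neg x (not_le.1 hneg)])
    _ = ∫⁻ x in Ioi 0, ∫⁻ q, f x * ENNReal.ofReal x⁻¹ * g (q / x) * ψ q := by
        refine setLIntegral_congr_fun measurableSet_Ioi fun x (hx : 0 < x) => ?_
        have h := lintegral_comp_mul_left_of_pos (fun q => g (q / x) * ψ q) hx
        simp only [mul_div_cancel_left₀ _ hx.ne'] at h
        rw [h, ← mul_assoc, ← lintegral_const_mul _ (by fun_prop)]
        simp only [mul_assoc]
    _ = ∫⁻ q, (∫⁻ x in Ioi 0, f x * ENNReal.ofReal x⁻¹ * g (q / x)) * ψ q := by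
        rw [lintegral_lintegral_swap (by fun_prop)]
        refine lintegral_congr fun q => ?_
        rw [lintegral_mul_const _ (by fun_prop)]
    _ = _ := by
        rw [lintegral_withDensity_eq_lintegral_mul _ hF.lintegral_prod_left' hψ]
        rfl

theorem neZero_withDensity_of_ne_zero_of_lt {f : ℝ → ℝ≥0∞} (hf : Measurable f) {a : ℝ}
    (h : ∀ x, a < x → f x ≠ 0) : NeZero (volume.withDensity f) := by
  refine ⟨fun h0 => ?_⟩
  rw [withDensity_eq_zero_iff hf.aemeasurable, Filter.EventuallyEq, ae_iff] at h0
  simpa using measure_mono_null (s := Ioi a) h h0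

/-- `f_Z`: the density of a `Gamma(L, A)` variable plus an independent `Exp(mean C)` variable,
where `t = (1/A - 1/C)⁻¹`. -/
noncomputable def sumDensity (L : ℕ) (A C t z : ℝ) : ℝ :=
  if 0 < z then t ^ L / ((L - 1)! * A ^ L * C) * exp (-z / C) * lowerGamma L (z / t) else 0

/-- `f_Q`: the density of `Q = Z₂ · Z`, where `θ = 1/C + 1/t`. -/
noncomputable def productDensity (L : ℕ) (A B C t θ q : ℝ) : ℝ :=
  if 0 < q then
    2 * t ^ L / (B * C * A ^ L) *
      (besselK 0 (2 * √(q / (B * C))) -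
        ∑ j ∈ range L, (B * θ) ^ (-(j : ℝ) / 2) * q ^ ((j : ℝ) / 2) / (t ^ j * j !) *
          besselK j (2 * √(q * θ / B)))
  else 0

theorem measurable_sumDensity (L : ℕ) (A C t : ℝ) : Measurable (sumDensity L A C t) :=
  Measurable.ite measurableSet_Ioi
    ((measurable_const.mul (measurable_neg.div_const C).exp).mul
      ((monotone_lowerGamma L).measurable.comp (measurable_id.div_const t)))
    measurable_const

theorem sumDensity_pos {L : ℕ} {A C t z : ℝ} (hA : 0 < A) (hC : 0 < C) (ht : 0 < t)
    (hz : 0 < z) : 0 < sumDensity L A C t z := by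
  rw [sumDensity, if_pos hz]
  have := lowerGamma_pos L (div_pos hz ht)
  positivity

theorem lintegral_exponentialPDF_mul_sumDensity {L : ℕ} (hL : 1 ≤ L) {A B C t θ : ℝ}
    (hA : 0 < A) (hB : 0 < B) (hC : 0 < C) (ht : 0 < t) (hθ : θ = 1 / C + 1 / t) (q : ℝ) :
    ∫⁻ z in Ioi 0, exponentialPDF (1 / B) z * ENNReal.ofReal z⁻¹ *
        ENNReal.ofReal (sumDensity L A C t (q / z)) =
      ENNReal.ofReal (productDensity L A B C t θ q) := by
  rcases le_or_gt q 0 with hq | hq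
  · have hzero : ∀ z ∈ Ioi (0 : ℝ), exponentialPDF (1 / B) z * ENNReal.ofReal z⁻¹ *
        ENNReal.ofReal (sumDensity L A C t (q / z)) = 0 := fun z (hz : 0 < z) => by
      simp [sumDensity, (div_nonpos_of_nonpos_of_nonneg hq hz.le).not_gt]
    rw [setLIntegral_congr_fun measurableSet_Ioi hzero]
    simp [productDensity, hq.not_gt]
  have hpoint : ∀ z ∈ Ioi (0 : ℝ), exponentialPDF (1 / B) z * ENNReal.ofReal z⁻¹ *
      ENNReal.ofReal (sumDensity L A C t (q / z)) =
        ENNReal.ofReal (1 / B * (t ^ L / ((L - 1)! * A ^ L * C)) *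
          (exp (-(1 / B * z)) * z⁻¹ * (exp (-(q / C / z)) * lowerGamma L (q / t / z)))) :=
    fun z (hz : 0 < z) => by
      rw [exponentialPDF_of_nonneg hz.le, sumDensity, if_pos (div_pos hq hz),
        ← ENNReal.ofReal_mul (by positivity), ← ENNReal.ofReal_mul (by positivity),
        div_right_comm q C, div_right_comm q t, neg_div]
      congr 1
      ring
  rw [setLIntegral_congr_fun measurableSet_Ioi hpoint, ← ofReal_integral_eq_lintegral_ofReal,
    integral_const_mul, integral_exp_mul_lowerGamma hL (by positivity) (by positivity)
      (by positivity), productDensity, if_pos hq]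
  · have hθq : q / C + q / t = q * θ := by rw [hθ]; ring
    have hcoef (k : ℕ) : (q / t) ^ k / k ! * (q * θ / (1 / B)) ^ (-(k : ℝ) / 2) =
        (B * θ) ^ (-(k : ℝ) / 2) * q ^ ((k : ℝ) / 2) / (t ^ k * k !) := by
      have hqk : q ^ k * q ^ (-(k : ℝ) / 2) = q ^ ((k : ℝ) / 2) := by
        rw [← rpow_natCast, ← rpow_add hq]; ring_nf
      rw [show q * θ / (1 / B) = B * θ * q by field_simp,
        mul_rpow (by rw [hθ]; positivity) hq.le, ← hqk, div_pow]
      ring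
    rw [hθq, show 1 / B * (q / C) = q / (B * C) by ring,
      show 1 / B * (q * θ) = q * θ / B by ring]
    simp only [hcoef]
    congr 1
    field_simp
  · exact (integrableOn_exp_mul_lowerGamma hL (by positivity) (by positivity)
      (by positivity)).const_mul _
  · filter_upwards [ae_restrict_mem measurableSet_Ioi] with z (hz : 0 < z)
    have := lowerGamma_nonneg L (q / t / z)
    dsimp only [Pi.zero_apply]
    positivity

/-- If `Z₂ ~ Exp(mean B)` and `Z` has the density of the sum of a
`Gamma(L, A)` and an independent `Exp(mean C)` (`A < C`, `t = (1/A - 1/C)⁻¹`),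
with `Z₂ ⟂ Z`, then `Q = Z₂ · Z` has density
`f_Q(q) = (2 t^L/(B C A^L)) [K₀(2√(q/(BC))) -
  ∑_{j=0}^{L-1} ((Bθ)^(-j/2) q^(j/2) / (t^j Γ(j+1))) K_j(2√(qθ/B))]` on `(0,∞)`,
where `θ = 1/C + 1/t`. -/
theorem stmt19 {Ω : Type*} [MeasureSpace Ω] (μ : Measure Ω) [IsProbabilityMeasure μ]
    (Z₂ Z : Ω → ℝ) (L : ℕ) (hL : 1 ≤ L) (A B C t θ : ℝ)
    (hA : 0 < A) (hB : 0 < B) (hC : 0 < C) (hAC : A < C)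
    (ht : t = (1 / A - 1 / C)⁻¹) (hθ : θ = 1 / C + 1 / t)
    (hZ₂ : Measure.map Z₂ μ = expMeasure (1 / B))
    (hZ : Measure.map Z μ =
      volume.withDensity fun z => ENNReal.ofReal
        (if 0 < z then
          t ^ L / ((Nat.factorial (L - 1) : ℝ) * A ^ L * C) *
            Real.exp (-z / C) * lowerGamma L (z / t)
        else 0))
    (hIndep : IndepFun Z₂ Z μ) :
    Measure.map (fun ω => Z₂ ω * Z ω) μ =
      volume.withDensity fun q => ENNReal.ofReal
        (if 0 < q then
          2 * t ^ L / (B * C * A ^ L) *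
            (besselK 0 (2 * Real.sqrt (q / (B * C))) -
              ∑ j ∈ Finset.range L,
                (B * θ) ^ (-(j : ℝ) / 2) * q ^ ((j : ℝ) / 2) /
                    (t ^ j * (Nat.factorial j : ℝ)) *
                  besselK j (2 * Real.sqrt (q * θ / B)))
        else 0) := by
  have ht_pos : 0 < t := by
    rw [ht]
    exact inv_pos.2 (sub_pos.2 (one_div_lt_one_div_of_lt hA hAC))
  have hZ' : μ.map Z = volume.withDensity fun z => ENNReal.ofReal (sumDensity L A C t z) := hZ
  have hexp : expMeasure (1 / B) = volume.withDensity (exponentialPDF (1 / B)) := rfl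
  have hZ₂m : AEMeasurable Z₂ μ := aemeasurable_of_map_neZero <| by
    rw [hZ₂]
    have := isProbabilityMeasure_expMeasure (one_div_pos.2 hB)
    infer_instance
  have hZm : AEMeasurable Z μ := aemeasurable_of_map_neZero <| by
    rw [hZ']
    exact neZero_withDensity_of_ne_zero_of_lt (measurable_sumDensity L A C t).ennreal_ofReal
      fun z hz => by simpa using sumDensity_pos hA hC ht_pos hz
  change μ.map (Z₂ * Z) =
    volume.withDensity fun q => ENNReal.ofReal (productDensity L A B C t θ q)
  rw [hIndep.map_mul_eq_map_mconv_map₀ hZ₂m hZm, hZ₂, hZ', hexp,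
    mconv_withDensity_eq_lintegral_Ioi (f := exponentialPDF (1 / B))
      (measurable_exponentialPDFReal _).ennreal_ofReal
      (measurable_sumDensity L A C t).ennreal_ofReal fun _ => exponentialPDF_of_neg]
  exact withDensity_congr_ae (ae_of_all _
    (lintegral_exponentialPDF_mul_sumDensity hL hA hB hC ht_pos hθ))
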